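/- arXiv:1601.05825 — 2 statements merged into one kernel-verified Lean document; each statement's English description precedes it below -/
import Mathlib

section
/- Let X be a Banach space such that B_{X*} is weak*-sequentially compact. Then every closed subspace of X is weak*-extensible. -/
open NormedSpace Filter

/-- A set is weakly compact if it is compact in the weak topology. -/
def IsWeaklyCompact {X : Type*} [NormedAddCommGroup X] [NormedSpace ℝ X] (L : Set X) : Prop :=
  IsCompact (toWeakSpace ℝ X '' L)

/-- Weak* convergence of a sequence of functionals. -/
def WStarTendsto {X : Type*} [NormedAddCommGroup X] [NormedSpace ℝ X]
    (f : ℕ → StrongDual ℝ X) (g : StrongDual ℝ X) : Prop :=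
  ∀ x : X, Tendsto (fun n => f n x) atTop (nhds (g x))

/-- Convergence in the Mackey topology μ(X*,X): uniform convergence on every
weakly compact subset of X. -/
def MackeyTendsto {X : Type*} [NormedAddCommGroup X] [NormedSpace ℝ X]
    (f : ℕ → StrongDual ℝ X) (g : StrongDual ℝ X) : Prop :=
  ∀ L : Set X, IsWeaklyCompact L → ∀ ε : ℝ, 0 < ε →
    ∀ᶠ n in atTop, ∀ x ∈ L, |f n x - g x| < ε

/-- `y` is a convex block subsequence of `x`. -/
def IsConvexBlock {E : Type*} [AddCommGroup E] [Module ℝ E] (x y : ℕ → E) : Prop :=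
  ∃ (I : ℕ → Finset ℕ) (a : ℕ → ℝ),
    (∀ k, (I k).Nonempty) ∧
    (∀ k m m', m ∈ I k → m' ∈ I (k + 1) → m < m') ∧
    (∀ n, 0 ≤ a n) ∧
    (∀ k, ∑ n ∈ I k, a n = 1) ∧
    (∀ k, y k = ∑ n ∈ I k, a n • x n)

/-- Property (K): every weak*-convergent sequence in the dual admits a convex block
subsequence converging in the Mackey topology. -/
def PropertyK (X : Type*) [NormedAddCommGroup X] [NormedSpace ℝ X] : Prop :=
  ∀ (f : ℕ → StrongDual ℝ X) (g : StrongDual ℝ X), WStarTendsto f g →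
    ∃ (y : ℕ → StrongDual ℝ X) (h : StrongDual ℝ X), IsConvexBlock f y ∧ MackeyTendsto y h

/-- A closed subspace Y of X is weak*-extensible if every weak*-null sequence in Y*
admits a subsequence which extends to a weak*-null sequence in X*. -/
def WStarExtensible (X : Type*) [NormedAddCommGroup X] [NormedSpace ℝ X]
    (Y : Submodule ℝ X) : Prop :=
  ∀ g : ℕ → StrongDual ℝ ↥Y, WStarTendsto g 0 →
    ∃ φ : ℕ → ℕ, StrictMono φ ∧ ∃ f : ℕ → StrongDual ℝ X, WStarTendsto f 0 ∧
      ∀ n, (f n).comp Y.subtypeL = g (φ n)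

/-
Extend each `gₙ` by Hahn–Banach to `fₙ ∈ X*` with `‖fₙ‖ = ‖gₙ‖`. By Banach–Steinhaus the `gₙ` are
bounded, so sequential compactness of the dual ball gives a subsequence `f_{φ n}` weak*-converging
to some `h`. On `Y` the limit `h` agrees with the weak*-limit `0` of the `gₙ`, so `f_{φ n} - h`
still extends `g_{φ n}` and is weak*-null.
-/

section WStarTendsto

variable {X : Type*} [NormedAddCommGroup X] [NormedSpace ℝ X]

theorem WStarTendsto.comp_strictMono {f : ℕ → StrongDual ℝ X} {g : StrongDual ℝ X}
    (hf : WStarTendsto f g) {φ : ℕ → ℕ} (hφ : StrictMono φ) : WStarTendsto (f ∘ φ) g :=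
  fun x => (hf x).comp hφ.tendsto_atTop

theorem WStarTendsto.sub_const {f : ℕ → StrongDual ℝ X} {g : StrongDual ℝ X}
    (hf : WStarTendsto f g) (h : StrongDual ℝ X) : WStarTendsto (fun n => f n - h) (g - h) :=
  fun x => (hf x).sub_const (h x)

theorem WStarTendsto.const_smul {f : ℕ → StrongDual ℝ X} {g : StrongDual ℝ X}
    (hf : WStarTendsto f g) (c : ℝ) : WStarTendsto (fun n => c • f n) (c • g) :=
  fun x => (hf x).const_mul c

theorem WStarTendsto.exists_norm_le [CompleteSpace X] {f : ℕ → StrongDual ℝ X}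
    {g : StrongDual ℝ X} (hf : WStarTendsto f g) : ∃ C, ∀ n, ‖f n‖ ≤ C :=
  banach_steinhaus fun x =>
    let ⟨M, hM⟩ := (hf x).norm.bddAbove_range
    ⟨M, fun n => hM ⟨n, rfl⟩⟩

theorem exists_wstarTendsto_subseq_of_norm_le
    (hseq : ∀ f : ℕ → StrongDual ℝ X, (∀ n, ‖f n‖ ≤ 1) →
      ∃ φ : ℕ → ℕ, StrictMono φ ∧ ∃ g : StrongDual ℝ X, WStarTendsto (f ∘ φ) g)
    {f : ℕ → StrongDual ℝ X} {C : ℝ} (hC : ∀ n, ‖f n‖ ≤ C) :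
    ∃ φ : ℕ → ℕ, StrictMono φ ∧ ∃ g : StrongDual ℝ X, WStarTendsto (f ∘ φ) g := by
  have hpos : 0 < C + 1 := by linarith [(norm_nonneg _).trans (hC 0)]
  have hscaled : ∀ n, ‖(C + 1)⁻¹ • f n‖ ≤ 1 := fun n => by
    rw [norm_smul, norm_inv, Real.norm_of_nonneg hpos.le, inv_mul_le_iff₀ hpos, mul_one]
    linarith [hC n]
  obtain ⟨φ, hφ, g, hg⟩ := hseq _ hscaled
  refine ⟨φ, hφ, (C + 1) • g, ?_⟩
  simpa only [Function.comp_def, smul_inv_smul₀ hpos.ne'] using hg.const_smul (C + 1)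

theorem exists_wstarNull_extensions_of_wstarTendsto {Y : Submodule ℝ X}
    {g : ℕ → StrongDual ℝ Y} (hg : WStarTendsto g 0) {f : ℕ → StrongDual ℝ X} (hfg : ∀ n (y : Y), f n y = g n y) {h : StrongDual ℝ X}
    (hf : WStarTendsto f h) :
    ∃ f' : ℕ → StrongDual ℝ X, WStarTendsto f' 0 ∧ ∀ n, (f' n).comp Y.subtypeL = g n := by
  have hY : h.comp Y.subtypeL = 0 := by
    ext y
    refine tendsto_nhds_unique (hf y) ?_
    simpa only [hfg] using hg y
  refine ⟨fun n => f n - h, by simpa using hf.sub_const h, fun n => ?_⟩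
  rw [ContinuousLinearMap.sub_comp, hY, sub_zero]
  ext y
  exact hfg n y

end WStarTendsto

theorem wstarExtensible_of_seqCompactBall (X : Type*) [NormedAddCommGroup X]
    [NormedSpace ℝ X] [CompleteSpace X]
    (hseq : ∀ f : ℕ → StrongDual ℝ X, (∀ n, ‖f n‖ ≤ 1) →
      ∃ φ : ℕ → ℕ, StrictMono φ ∧ ∃ g : StrongDual ℝ X, WStarTendsto (f ∘ φ) g) :
    ∀ Y : Submodule ℝ X, IsClosed (Y : Set X) → WStarExtensible X Y := by
  intro Y hY g hg
  have : CompleteSpace Y := hY.completeSpace_coe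
  obtain ⟨C, hC⟩ := hg.exists_norm_le
  choose f hfg hfn using fun n => exists_extension_norm_eq Y (g n)
  obtain ⟨φ, hφ, h, hh⟩ :=
    exists_wstarTendsto_subseq_of_norm_le hseq fun n => (hfn n).trans_le (hC n)
  obtain ⟨f', hf', hf'g⟩ :=
    exists_wstarNull_extensions_of_wstarTendsto (hg.comp_strictMono hφ) (fun n => hfg (φ n)) hh
  exact ⟨φ, hφ, f', hf', hf'g⟩
end

section
/- If a Banach space X has property (K), then X contains no complemented subspace isomorphic to c₀. -/
open NormedSpace Filter

/-!
Property (K) passes to complemented subspaces: if `T ∘ S = id` with `S : c₀ → X`, a weak*-null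
sequence `fₙ` in `c₀*` lifts to `fₙ ∘ T`, convex blocks of the lift composed with `S` are convex
blocks of `fₙ`, and `S` maps weakly compact sets to weakly compact sets.

So it suffices that `c₀` fails (K). Convex blocks `gₖ` of the coordinate functionals are
weak*-null, so their Mackey limit is `0`. The indicators `1_{Iₖ}` of the disjoint supports of the
blocks are weakly null, since `∑ₖ |ψ 1_{Iₖ}| ≤ ‖ψ‖` for every `ψ ∈ c₀*`; hence
`{0} ∪ {1_{Iₖ}}` is weakly compact, yet `gₖ 1_{Iₖ} = 1` for all `k`.
-/

open Function
open scoped Topology ZeroAtInfty Finset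

section BlockIndices

variable {I : ℕ → Finset ℕ}

theorem strictMono_min'_of_block (hne : ∀ k, (I k).Nonempty)
    (hlt : ∀ k m m', m ∈ I k → m' ∈ I (k + 1) → m < m') :
    StrictMono fun k => (I k).min' (hne k) :=
  strictMono_nat_of_lt_succ fun k => hlt k _ _ (Finset.min'_mem _ _) (Finset.min'_mem _ _)

theorem le_of_mem_block (hne : ∀ k, (I k).Nonempty)
    (hlt : ∀ k m m', m ∈ I k → m' ∈ I (k + 1) → m < m') {k n : ℕ} (hn : n ∈ I k) : k ≤ n :=
  ((strictMono_min'_of_block hne hlt).id_le k).trans (Finset.min'_le _ _ hn)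

theorem lt_of_mem_block (hne : ∀ k, (I k).Nonempty)
    (hlt : ∀ k m m', m ∈ I k → m' ∈ I (k + 1) → m < m') {k l m m' : ℕ} (hkl : k < l)
    (hm : m ∈ I k) (hm' : m' ∈ I l) : m < m' :=
  calc m < (I (k + 1)).min' (hne _) := hlt k _ _ hm (Finset.min'_mem _ _)
    _ ≤ (I l).min' (hne l) := (strictMono_min'_of_block hne hlt).monotone hkl
    _ ≤ m' := Finset.min'_le _ _ hm'

theorem pairwise_disjoint_of_block (hne : ∀ k, (I k).Nonempty)
    (hlt : ∀ k m m', m ∈ I k → m' ∈ I (k + 1) → m < m') : Pairwise (Disjoint on I) :=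
  (pairwise_disjoint_on _).2 fun _ _ hkl => Finset.disjoint_left.2 fun _ hm hm' =>
    (lt_of_mem_block hne hlt hkl hm hm').false

end BlockIndices

namespace IsConvexBlock

variable {E F : Type*} [AddCommGroup E] [Module ℝ E] [AddCommGroup F] [Module ℝ F] {x y : ℕ → E}

theorem map {G : Type*} [FunLike G E F] [LinearMapClass G ℝ E F] (h : IsConvexBlock x y) (φ : G) :
    IsConvexBlock (φ ∘ x) (φ ∘ y) := by
  obtain ⟨I, a, hne, hlt, ha, hsum, hy⟩ := h
  exact ⟨I, a, hne, hlt, ha, hsum, fun k => by simp [hy k, map_sum]⟩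

theorem tendsto [TopologicalSpace E] [LocallyConvexSpace ℝ E] {l : E} (h : IsConvexBlock x y)
    (hx : Tendsto x atTop (𝓝 l)) : Tendsto y atTop (𝓝 l) := by
  obtain ⟨I, a, hne, hlt, ha, hsum, hy⟩ := h
  refine (LocallyConvexSpace.convex_basis (𝕜 := ℝ) l).tendsto_right_iff.2 fun s ⟨hs, hconv⟩ => ?_
  obtain ⟨N, hN⟩ := eventually_atTop.1 (hx hs)
  filter_upwards [eventually_ge_atTop N] with k hk
  rw [hy k]
  exact hconv.sum_mem (fun n _ => ha n) (hsum k) fun n hn =>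
    hN n (hk.trans (le_of_mem_block hne hlt hn))

end IsConvexBlock

section WeakCompactness

variable {E X : Type*} [NormedAddCommGroup E] [NormedSpace ℝ E] [NormedAddCommGroup X]
  [NormedSpace ℝ X]

theorem isWeaklyCompact_singleton (x : X) : IsWeaklyCompact {x} := by
  rw [IsWeaklyCompact, Set.image_singleton]
  exact isCompact_singleton

theorem IsWeaklyCompact.image {L : Set E} (hL : IsWeaklyCompact L) (S : E →L[ℝ] X) :
    IsWeaklyCompact (S '' L) := by
  have hSL := IsCompact.image hL (WeakSpace.map S).continuous
  rw [Set.image_image] at hSL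
  rw [IsWeaklyCompact, Set.image_image]
  exact hSL

theorem isWeaklyCompact_insert_range {x : ℕ → X} {l : X}
    (hx : ∀ φ : StrongDual ℝ X, Tendsto (fun k => φ (x k)) atTop (𝓝 (φ l))) :
    IsWeaklyCompact (insert l (Set.range x)) := by
  rw [IsWeaklyCompact, Set.image_insert_eq, ← Set.range_comp]
  refine Tendsto.isCompact_insert_range ?_
  have hinduced := Topology.IsInducing.induced (X := WeakSpace ℝ X) fun x (φ : StrongDual ℝ X) => φ x
  exact hinduced.tendsto_nhds_iff.2 (tendsto_pi_nhds.2 hx)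

theorem MackeyTendsto.tendsto_apply {f : ℕ → StrongDual ℝ X} {g : StrongDual ℝ X}
    (h : MackeyTendsto f g) (x : X) : Tendsto (fun n => f n x) atTop (𝓝 (g x)) :=
  Metric.tendsto_nhds.2 fun ε hε =>
    (h {x} (isWeaklyCompact_singleton x) ε hε).mono fun _ hn => hn x rfl

theorem PropertyK.of_retract (hX : PropertyK X) (T : X →L[ℝ] E) (S : E →L[ℝ] X)
    (hTS : ∀ u, T (S u) = u) : PropertyK E := by
  intro f g hfg
  obtain ⟨y, h, hblock, hmackey⟩ := hX (fun n => (f n).comp T) (g.comp T) fun x => hfg (T x)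
  refine ⟨fun k => (y k).comp S, h.comp S, ?_, fun L hL ε hε => ?_⟩
  · convert hblock.map (ContinuousLinearMap.precomp ℝ S) using 1
    · ext n u
      simp [hTS]
    · rfl
  · exact (hmackey _ (hL.image S) ε hε).mono fun k hk u hu => hk (S u) ⟨u, hu, rfl⟩

end WeakCompactness

namespace ZeroAtInftyContinuousMap

section Eval

variable {α β : Type*} [TopologicalSpace α] [NormedAddCommGroup β] (𝕜 : Type*) [NormedField 𝕜]
  [NormedSpace 𝕜 β]

noncomputable def evalCLM (x : α) : C₀(α, β) →L[𝕜] β :=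
  LinearMap.mkContinuous
    { toFun := fun f => f x, map_add' := fun _ _ => rfl, map_smul' := fun _ _ => rfl } 1
    fun f => by simpa [← norm_toBCF_eq_norm] using f.toBCF.norm_coe_le_norm x

@[simp]
theorem evalCLM_apply (x : α) (f : C₀(α, β)) : evalCLM 𝕜 x f = f x := rfl

end Eval

theorem tendsto_atTop_zero {β : Type*} [TopologicalSpace β] [Zero β] (f : C₀(ℕ, β)) :
    Tendsto f atTop (𝓝 0) := by
  simpa [cocompact_eq_cofinite, Nat.cofinite_eq_atTop] using zero_at_infty f

variable {α : Type*} [TopologicalSpace α] [DiscreteTopology α]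

noncomputable def finsetIndicator (s : Finset α) : C₀(α, ℝ) where
  toFun := (s : Set α).indicator 1
  continuous_toFun := continuous_of_discreteTopology
  zero_at_infty' := by
    rw [cocompact_eq_cofinite]
    refine tendsto_const_nhds.congr' ?_
    filter_upwards [s.finite_toSet.compl_mem_cofinite] with m hm
    exact (Set.indicator_of_notMem hm _).symm

theorem finsetIndicator_apply (s : Finset α) (m : α) :
    finsetIndicator s m = (s : Set α).indicator 1 m := rfl

theorem norm_sum_smul_finsetIndicator_le {ι : Type*} {I : ι → Finset α}
    (hI : Pairwise (Disjoint on I)) (K : Finset ι) {c : ι → ℝ} (hc : ∀ k, |c k| ≤ 1) :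
    ‖∑ k ∈ K, c k • finsetIndicator (I k)‖ ≤ 1 := by
  classical
  rw [← norm_toBCF_eq_norm, BoundedContinuousFunction.norm_le zero_le_one]
  intro m
  have hcard : #{k ∈ K | m ∈ I k} ≤ 1 := Finset.card_le_one.2 fun k hk l hl =>
    hI.eq (Finset.not_disjoint_iff.2 ⟨m, (Finset.mem_filter.1 hk).2, (Finset.mem_filter.1 hl).2⟩)
  calc ‖evalCLM ℝ m (∑ k ∈ K, c k • finsetIndicator (I k))‖
      = ‖∑ k ∈ K, c k * (I k : Set α).indicator 1 m‖ := by
        simp [map_sum, finsetIndicator_apply]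
    _ ≤ ∑ k ∈ K, (I k : Set α).indicator 1 m := by
        refine (norm_sum_le _ _).trans (Finset.sum_le_sum fun k _ => ?_)
        have h0 : 0 ≤ (I k : Set α).indicator (1 : α → ℝ) m :=
          Set.indicator_nonneg (fun _ _ => zero_le_one) m
        rw [norm_mul, Real.norm_eq_abs, Real.norm_eq_abs, abs_of_nonneg h0]
        exact mul_le_of_le_one_left h0 (hc k)
    _ = #{k ∈ K | m ∈ I k} := by simp [Set.indicator_apply, Finset.sum_boole]
    _ ≤ 1 := mod_cast hcard

theorem sum_abs_apply_finsetIndicator_le {ι : Type*} {I : ι → Finset α}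
    (hI : Pairwise (Disjoint on I)) (ψ : StrongDual ℝ C₀(α, ℝ)) (K : Finset ι) :
    ∑ k ∈ K, |ψ (finsetIndicator (I k))| ≤ ‖ψ‖ := by
  have abs_sign_le_one (s : SignType) : |(s : ℝ)| ≤ 1 := by cases s <;> simp
  set c : ι → ℝ := fun k => SignType.sign (ψ (finsetIndicator (I k)))
  calc ∑ k ∈ K, |ψ (finsetIndicator (I k))|
      = ψ (∑ k ∈ K, c k • finsetIndicator (I k)) := by simp [c, map_sum, sign_mul_self]
    _ ≤ ‖ψ‖ * ‖∑ k ∈ K, c k • finsetIndicator (I k)‖ := (le_abs_self _).trans (ψ.le_opNorm _)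
    _ ≤ ‖ψ‖ := mul_le_of_le_one_right (norm_nonneg ψ)
      (norm_sum_smul_finsetIndicator_le hI K fun _ => abs_sign_le_one _)

theorem tendsto_apply_finsetIndicator_zero {I : ℕ → Finset α} (hI : Pairwise (Disjoint on I))
    (ψ : StrongDual ℝ C₀(α, ℝ)) : Tendsto (fun k => ψ (finsetIndicator (I k))) atTop (𝓝 0) := by
  rw [tendsto_zero_iff_abs_tendsto_zero]
  exact (summable_of_sum_range_le (fun _ => abs_nonneg _) fun N =>
    sum_abs_apply_finsetIndicator_le hI ψ _).tendsto_atTop_zero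

theorem not_propertyK : ¬ PropertyK C₀(ℕ, ℝ) := by
  intro hK
  have hnull : WStarTendsto (fun n => evalCLM ℝ n) 0 := fun u => by
    simpa using u.tendsto_atTop_zero
  obtain ⟨g, h, hblock, hmackey⟩ := hK _ 0 hnull
  have hh : h = 0 := ContinuousLinearMap.ext fun u => tendsto_nhds_unique
    (hmackey.tendsto_apply u) ((hblock.map (ContinuousLinearMap.apply ℝ ℝ u)).tendsto (hnull u))
  obtain ⟨I, a, hne, hlt, -, hsum, hg⟩ := hblock
  have hL : IsWeaklyCompact (insert 0 (Set.range fun k => finsetIndicator (I k))) :=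
    isWeaklyCompact_insert_range fun ψ => by
      simpa using tendsto_apply_finsetIndicator_zero (pairwise_disjoint_of_block hne hlt) ψ
  have hgI : ∀ k, g k (finsetIndicator (I k)) = 1 := fun k => by
    rw [hg k, ← hsum k]
    simp only [sum_apply, _root_.smul_apply, evalCLM_apply, finsetIndicator_apply, smul_eq_mul]
    exact Finset.sum_congr rfl fun n hn => by simp [hn]
  obtain ⟨k, hk⟩ := (hmackey _ hL 1 one_pos).exists
  simpa [hh, hgI] using hk _ (Set.mem_insert_of_mem _ ⟨k, rfl⟩)

end ZeroAtInftyContinuousMap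

theorem propertyK_no_complemented_c0_general (X : Type*) [NormedAddCommGroup X]
    [NormedSpace ℝ X] (hX : PropertyK X) :
    ¬ ∃ (Y : Submodule ℝ X) (P : X →L[ℝ] X)
        (e : ↥Y ≃L[ℝ] ZeroAtInftyContinuousMap ℕ ℝ),
      (∀ x, P x ∈ Y) ∧ ∀ y ∈ Y, P y = y := by
  rintro ⟨Y, P, e, hPY, hPid⟩
  have hP : ∀ y : Y, P.codRestrict Y hPY y = y := fun y => Subtype.ext (hPid y y.2)
  exact ZeroAtInftyContinuousMap.not_propertyK <| hX.of_retract
    ((e : Y →L[ℝ] C₀(ℕ, ℝ)).comp (P.codRestrict Y hPY))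
    (Y.subtypeL.comp (e.symm : C₀(ℕ, ℝ) →L[ℝ] Y)) fun u => by simp [hP]

theorem propertyK_no_complemented_c0 (X : Type*) [NormedAddCommGroup X]
    [NormedSpace ℝ X] [CompleteSpace X] (hX : PropertyK X) :
    ¬ ∃ (Y : Submodule ℝ X) (P : X →L[ℝ] X)
        (e : ↥Y ≃L[ℝ] ZeroAtInftyContinuousMap ℕ ℝ),
      (∀ x, P x ∈ Y) ∧ ∀ y ∈ Y, P y = y :=
  propertyK_no_complemented_c0_general X hX
end
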